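/- arXiv:1502.00796 — 2 statements merged into one kernel-verified Lean document; each statement's English description precedes it below -/
import Mathlib

section
/- Let Ω ⊂ ℝ^N be open and bounded, g₁, g₂ ∈ L^∞(Ω) with g₁, g₂ ≥ m > 0 a.e. If v₁ ∈ W₀^{1,p}(Ω) satisfies |∇v₁| ≤ g₁ a.e., then the function v̂₂ = v₁ / (1 + α/m), where α = ‖g₁ - g₂‖_{L^∞(Ω)}, satisfies |∇v̂₂| ≤ g₂ a.e. and ‖∇(v₁ - v̂₂)‖_{L^p(Ω)} ≤ (1/m) ‖∇v₁‖_{L^p(Ω)} ‖g₁ - g₂‖_{L^∞(Ω)}. -/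
/-! Writing α = ‖g₁ - g₂‖_∞, a.e. |∇v₁| ≤ g₁ ≤ g₂ + α ≤ (1 + α/m) g₂ since g₂ ≥ m, so dividing by
1 + α/m enforces the constraint g₂. Then v₁ - v̂₂ = (1 - (1 + α/m)⁻¹) v₁ and the factor
1 - (1 + α/m)⁻¹ = (α/m)/(1 + α/m) is at most α/m. -/

open MeasureTheory
open scoped ENNReal

theorem ae_norm_le_toReal_eLpNorm_top {α F : Type*} [MeasurableSpace α] {μ : Measure α}
    [NormedAddCommGroup F] {f : α → F} (hf : eLpNorm f ⊤ μ ≠ ⊤) :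
    ∀ᵐ x ∂μ, ‖f x‖ ≤ (eLpNorm f ⊤ μ).toReal := by
  rw [eLpNorm_exponent_top] at hf ⊢
  filter_upwards [ae_le_eLpNormEssSup (f := f)] with x hx
  simpa only [toReal_enorm] using ENNReal.toReal_mono hf hx

theorem div_one_add_div_le {t b α m : ℝ} (hm : 0 < m) (hα : 0 ≤ α) (hb : m ≤ b)
    (ht : t ≤ b + α) : t / (1 + α / m) ≤ b := by
  have hαb : α ≤ α / m * b := by
    rw [div_mul_eq_mul_div, le_div_iff₀ hm]
    exact mul_le_mul_of_nonneg_left hb hα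
  rw [div_le_iff₀ (by positivity)]
  linarith

theorem abs_one_sub_inv_one_add_le {x : ℝ} (hx : 0 ≤ x) : |1 - (1 + x)⁻¹| ≤ x := by
  have h : 1 - (1 + x)⁻¹ = x / (1 + x) := by field_simp; ring
  rw [h, abs_of_nonneg (by positivity)]
  exact div_le_self hx (by linarith)

theorem norm_fderiv_const_smul {E : Type*} [NormedAddCommGroup E] [NormedSpace ℝ E]
    (c : ℝ) (f : E → ℝ) (x : E) : ‖fderiv ℝ (c • f) x‖ = |c| * ‖fderiv ℝ f x‖ := by
  rw [fderiv_const_smul_field, Pi.smul_apply, norm_smul, Real.norm_eq_abs]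

theorem constraint_scaling_lemma_general {N : ℕ} (Ω : Set (EuclideanSpace ℝ (Fin N)))
    (p : ℝ≥0∞)
    (g₁ g₂ : EuclideanSpace ℝ (Fin N) → ℝ) (m : ℝ) (hm : 0 < m)
    (hg₂m : ∀ᵐ x ∂(volume.restrict Ω), m ≤ g₂ x)
    (hfin : eLpNorm (fun x => g₁ x - g₂ x) ⊤ (volume.restrict Ω) ≠ ⊤)
    (v₁ : EuclideanSpace ℝ (Fin N) → ℝ)
    (hgrad : ∀ᵐ x ∂(volume.restrict Ω), ‖fderiv ℝ v₁ x‖ ≤ g₁ x) :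
    let α : ℝ := (eLpNorm (fun x => g₁ x - g₂ x) ⊤ (volume.restrict Ω)).toReal
    let vhat₂ : EuclideanSpace ℝ (Fin N) → ℝ := fun x => v₁ x / (1 + α / m)
    (∀ᵐ x ∂(volume.restrict Ω), ‖fderiv ℝ vhat₂ x‖ ≤ g₂ x) ∧
      eLpNorm (fun x => ‖fderiv ℝ (fun y => v₁ y - vhat₂ y) x‖) p (volume.restrict Ω)
        ≤ ENNReal.ofReal ((1 / m) * α) *
            eLpNorm (fun x => ‖fderiv ℝ v₁ x‖) p (volume.restrict Ω) := by
  intro α vhat₂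
  have hα : 0 ≤ α / m := div_nonneg ENNReal.toReal_nonneg hm.le
  have hvhat : vhat₂ = (1 + α / m)⁻¹ • v₁ := by
    funext x; simp [vhat₂, div_eq_inv_mul]
  have hdiff : (fun y => v₁ y - vhat₂ y) = (1 - (1 + α / m)⁻¹) • v₁ := by
    funext x; simp [hvhat, sub_mul]
  constructor
  · filter_upwards [ae_norm_le_toReal_eLpNorm_top hfin, hgrad, hg₂m] with x hα₁₂ hv₁ hmg₂
    rw [hvhat, norm_fderiv_const_smul, abs_of_pos (by positivity), inv_mul_eq_div]
    rw [Real.norm_eq_abs] at hα₁₂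
    exact div_one_add_div_le hm ENNReal.toReal_nonneg hmg₂ (by linarith [(abs_le.mp hα₁₂).2])
  · simp_rw [hdiff, norm_fderiv_const_smul]
    rw [show (fun x => |1 - (1 + α / m)⁻¹| * ‖fderiv ℝ v₁ x‖) =
        |1 - (1 + α / m)⁻¹| • fun x => ‖fderiv ℝ v₁ x‖ from rfl, eLpNorm_const_smul,
      Real.enorm_eq_ofReal_abs, abs_abs, one_div_mul_eq_div]
    gcongr
    exact abs_one_sub_inv_one_add_le hα

theorem constraint_scaling_lemma {N : ℕ} (Ω : Set (EuclideanSpace ℝ (Fin N)))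
    (hΩ : IsOpen Ω) (hbd : Bornology.IsBounded Ω)
    (p : ℝ≥0∞) (hp : 1 ≤ p) (hp' : p ≠ ⊤)
    (g₁ g₂ : EuclideanSpace ℝ (Fin N) → ℝ) (m : ℝ) (hm : 0 < m)
    (hg₁m : ∀ᵐ x ∂(volume.restrict Ω), m ≤ g₁ x)
    (hg₂m : ∀ᵐ x ∂(volume.restrict Ω), m ≤ g₂ x)
    (hfin : eLpNorm (fun x => g₁ x - g₂ x) ⊤ (volume.restrict Ω) ≠ ⊤)
    (v₁ : EuclideanSpace ℝ (Fin N) → ℝ) (hv₁ : Differentiable ℝ v₁)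
    (hgrad : ∀ᵐ x ∂(volume.restrict Ω), ‖fderiv ℝ v₁ x‖ ≤ g₁ x) :
    let α : ℝ := (eLpNorm (fun x => g₁ x - g₂ x) ⊤ (volume.restrict Ω)).toReal
    let vhat₂ : EuclideanSpace ℝ (Fin N) → ℝ := fun x => v₁ x / (1 + α / m)
    (∀ᵐ x ∂(volume.restrict Ω), ‖fderiv ℝ vhat₂ x‖ ≤ g₂ x) ∧
      eLpNorm (fun x => ‖fderiv ℝ (fun y => v₁ y - vhat₂ y) x‖) p (volume.restrict Ω)
        ≤ ENNReal.ofReal ((1 / m) * α) *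
            eLpNorm (fun x => ‖fderiv ℝ v₁ x‖) p (volume.restrict Ω) :=
  constraint_scaling_lemma_general Ω p g₁ g₂ m hm hg₂m hfin v₁ hgrad
end

section
/- Let z(x,t) for (x,t) ∈ [0,1] × [0,1] be defined by z(x,t) = tx - x²/2 if 0 ≤ x ≤ ξ(t), z(x,t) = x - 1 if ξ(t) < x ≤ 1 and t ≤ 1/2, z(x,t) = 1 - x if ξ(t) < x ≤ 1 and t > 1/2, where ξ(t) = t - 1 + √((1-t)² + 2) for t ≤ 1/2 and ξ(t) = t + 1 - √((t+1)² - 2) for t > 1/2. Then for each t, the map x ↦ z(x,t) is continuous on [0,1], vanishes at x = 0 and x = 1, and is 1-Lipschitz. -/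
theorem sandpile_profile_properties :
    let ξ : ℝ → ℝ := fun t =>
      if t ≤ 1 / 2 then t - 1 + Real.sqrt ((1 - t) ^ 2 + 2)
      else t + 1 - Real.sqrt ((t + 1) ^ 2 - 2)
    let z : ℝ → ℝ → ℝ := fun x t =>
      if x ≤ ξ t then t * x - x ^ 2 / 2
      else if t ≤ 1 / 2 then x - 1 else 1 - x
    ∀ t ∈ Set.Icc (0 : ℝ) 1,
      ContinuousOn (fun x => z x t) (Set.Icc 0 1) ∧
      z 0 t = 0 ∧ z 1 t = 0 ∧
      LipschitzOnWith 1 (fun x => z x t) (Set.Icc 0 1) := by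
  intro ξ z t ht
  obtain ⟨ht0, ht1⟩ := ht
  have hzdef : ∀ x u, z x u =
      if x ≤ ξ u then u * x - x ^ 2 / 2 else if u ≤ 1 / 2 then x - 1 else 1 - x :=
    fun _ _ => rfl
  have hξdef : ∀ u, ξ u = if u ≤ 1 / 2 then u - 1 + Real.sqrt ((1 - u) ^ 2 + 2)
      else u + 1 - Real.sqrt ((u + 1) ^ 2 - 2) := fun _ => rfl
  have hpar : ∀ x ∈ Set.Icc (0:ℝ) 1, ∀ y ∈ Set.Icc (0:ℝ) 1,
      |(t * x - x ^ 2 / 2) - (t * y - y ^ 2 / 2)| ≤ |x - y| := by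
    intro x hx y hy
    have h1 : (t * x - x ^ 2 / 2) - (t * y - y ^ 2 / 2) = (x - y) * (t - (x + y) / 2) := by
      ring
    rw [h1, abs_mul]
    have h2 : |t - (x + y) / 2| ≤ 1 := by
      rw [abs_le]
      obtain ⟨hx0, hx1⟩ := hx; obtain ⟨hy0, hy1⟩ := hy
      constructor <;> linarith
    calc |x - y| * |t - (x + y) / 2| ≤ |x - y| * 1 := by gcongr
      _ = |x - y| := mul_one _
  by_cases htc : t ≤ 1 / 2
  · -- case t ≤ 1/2
    set s := Real.sqrt ((1 - t) ^ 2 + 2) with hs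
    have hs0 : 0 ≤ s := Real.sqrt_nonneg _
    have hs2 : s ^ 2 = (1 - t) ^ 2 + 2 := Real.sq_sqrt (by positivity)
    have hξ : ξ t = t - 1 + s := by rw [hξdef, if_pos htc]
    have hξ0 : 0 ≤ ξ t := by rw [hξ]; nlinarith
    have hrep : ∀ x ∈ Set.Icc (0:ℝ) 1, z x t = max (t * x - x ^ 2 / 2) (x - 1) := by
      rintro x ⟨hx0, hx1⟩
      rw [hzdef]
      by_cases hxξ : x ≤ ξ t
      · rw [if_pos hxξ, max_eq_left]
        rw [hξ] at hxξ
        nlinarith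
      · rw [if_neg hxξ, if_pos htc, max_eq_right]
        push_neg at hxξ
        rw [hξ] at hxξ
        nlinarith
    have hlip : LipschitzOnWith 1 (fun x => z x t) (Set.Icc 0 1) := by
      rw [lipschitzOnWith_iff_dist_le_mul]
      intro x hx y hy
      rw [Real.dist_eq, Real.dist_eq, hrep x hx, hrep y hy]
      simp only [NNReal.coe_one, one_mul]
      calc |max (t * x - x ^ 2 / 2) (x - 1) - max (t * y - y ^ 2 / 2) (y - 1)|
          ≤ max |(t * x - x ^ 2 / 2) - (t * y - y ^ 2 / 2)| |(x - 1) - (y - 1)| :=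
            abs_max_sub_max_le_max _ _ _ _
        _ ≤ |x - y| := by
            refine max_le (hpar x hx y hy) ?_
            rw [show (x - 1) - (y - 1) = x - y by ring]
    refine ⟨hlip.continuousOn, ?_, ?_, hlip⟩
    · rw [hzdef, if_pos hξ0]; ring
    · by_cases h1ξ : (1:ℝ) ≤ ξ t
      · rw [hzdef, if_pos h1ξ]
        rw [hξ] at h1ξ
        have htv : t = 1 / 2 := by nlinarith
        rw [htv]; norm_num
      · rw [hzdef, if_neg h1ξ, if_pos htc]; ring
  · -- case t > 1/2
    push_neg at htc
    set s := Real.sqrt ((t + 1) ^ 2 - 2) with hs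
    have hs0 : 0 ≤ s := Real.sqrt_nonneg _
    have hs2 : s ^ 2 = (t + 1) ^ 2 - 2 := Real.sq_sqrt (by nlinarith)
    have hξ : ξ t = t + 1 - s := by rw [hξdef, if_neg (not_le.2 htc)]
    have hξ0 : 0 ≤ ξ t := by rw [hξ]; nlinarith
    have hξ1 : ξ t < 1 := by rw [hξ]; nlinarith
    have hrep : ∀ x ∈ Set.Icc (0:ℝ) 1, z x t = min (t * x - x ^ 2 / 2) (1 - x) := by
      rintro x ⟨hx0, hx1⟩
      rw [hzdef]
      by_cases hxξ : x ≤ ξ t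
      · rw [if_pos hxξ, min_eq_left]
        rw [hξ] at hxξ
        nlinarith [mul_nonneg (sub_nonneg.2 hxξ) (show (0:ℝ) ≤ t + 1 + s - x by nlinarith)]
      · rw [if_neg hxξ, if_neg (not_le.2 htc), min_eq_right]
        push_neg at hxξ
        rw [hξ] at hxξ
        nlinarith [mul_nonneg (sub_nonneg.2 hxξ.le) (show (0:ℝ) ≤ t + 1 + s - x by nlinarith)]
    have hlip : LipschitzOnWith 1 (fun x => z x t) (Set.Icc 0 1) := by
      rw [lipschitzOnWith_iff_dist_le_mul]
      intro x hx y hy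
      rw [Real.dist_eq, Real.dist_eq, hrep x hx, hrep y hy]
      simp only [NNReal.coe_one, one_mul]
      calc |min (t * x - x ^ 2 / 2) (1 - x) - min (t * y - y ^ 2 / 2) (1 - y)|
          ≤ max |(t * x - x ^ 2 / 2) - (t * y - y ^ 2 / 2)| |(1 - x) - (1 - y)| :=
            abs_min_sub_min_le_max _ _ _ _
        _ ≤ |x - y| := by
            refine max_le (hpar x hx y hy) ?_
            rw [show (1 - x) - (1 - y) = -(x - y) by ring, abs_neg]
    refine ⟨hlip.continuousOn, ?_, ?_, hlip⟩
    · rw [hzdef, if_pos hξ0]; ring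
    · rw [hzdef, if_neg (not_le.2 hξ1), if_neg (not_le.2 htc)]; ring
end
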